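/- arXiv:1111.0330 — 6 statements merged into one kernel-verified Lean document; each statement's English description precedes it below -/
import Mathlib

section
/- Let L → M → N (maps f, g) be S-linear maps of semimodules with g ∘ f = 0, and let f' : L → Ker(g) be the corestriction of f. If f' is an epimorphism in the category of S-semimodules, then the subtractive closure of f(L) equals Ker(g). -/
/-!
If `f' : L → Ker g` is an epimorphism, it cannot be separated from the zero map by the
projection of `Ker g` onto its quotient by the Bourne congruence of `f(L)`, namely
`x ~ y ↔ x + f l₁ = y + f l₂` for some `l₁ l₂`. That projection kills `f(L)`, so it is zero,
i.e. every `m ∈ Ker g` satisfies `m ~ 0`, which says that `m` is in the subtractive closure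
of `f(L)`.
-/

universe u

namespace LinearMap

variable {S L N : Type*} {M : Type u} [Semiring S] [AddCommMonoid L] [Module S L]
  [AddCommMonoid M] [Module S M] [AddCommMonoid N] [Module S N]

theorem mem_ker_of_add_apply_eq {f : L →ₗ[S] M} {g : M →ₗ[S] N} (hgf : g.comp f = 0)
    {m : M} {l₁ l₂ : L} (h : m + f l₁ = f l₂) : m ∈ ker g := by
  have hg : ∀ l, g (f l) = 0 := fun l => congr($hgf l)
  simpa [hg] using congr(g $h)

variable (f : L →ₗ[S] M)

def bourneCon : ModuleCon S M where
  r x y := ∃ a b : L, x + f a = y + f b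
  iseqv.refl _ := ⟨0, 0, rfl⟩
  iseqv.symm := fun ⟨a, b, h⟩ => ⟨b, a, h.symm⟩
  iseqv.trans := fun {x y z} ⟨a, b, hxy⟩ ⟨c, d, hyz⟩ => ⟨a + c, d + b, by
    calc x + f (a + c) = (x + f a) + f c := by rw [map_add, add_assoc]
      _ = (y + f c) + f b := by rw [hxy, add_right_comm]
      _ = z + f (d + b) := by rw [hyz, map_add, add_assoc]⟩
  add' := fun {x x' y y'} ⟨a, b, hx⟩ ⟨c, d, hy⟩ => ⟨a + c, b + d, by
    rw [map_add, map_add, add_add_add_comm, hx, hy, add_add_add_comm]⟩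
  smul s _ _ := fun ⟨a, b, h⟩ => ⟨s • a, s • b, by simp only [map_smul, ← smul_add, h]⟩

def bourneMk : M →ₗ[S] (bourneCon f).Quotient where
  __ := AddCon.mk' (bourneCon f).toAddCon
  map_smul' _ _ := rfl

theorem bourneMk_eq_zero_iff {m : M} : bourneMk f m = 0 ↔ ∃ a b : L, m + f a = f b :=
  (AddCon.eq _).trans <| exists₂_congr fun _ _ => by rw [zero_add]

theorem bourneMk_comp_eq_zero : (bourneMk f).comp f = 0 := by
  ext l
  exact (bourneMk_eq_zero_iff f).2 ⟨0, l, by simp [add_comm]⟩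

theorem exists_add_apply_eq_of_epi
    (hf : ∀ (Z : Type u) [AddCommMonoid Z] [Module S Z] (h₁ h₂ : M →ₗ[S] Z),
      h₁.comp f = h₂.comp f → h₁ = h₂) (m : M) :
    ∃ a b : L, m + f a = f b := by
  have hmk : bourneMk f = 0 := hf _ _ _ (by rw [bourneMk_comp_eq_zero, zero_comp])
  exact (bourneMk_eq_zero_iff f).1 congr($hmk m)

end LinearMap

/-- if the corestriction `f' : L → Ker(g)` of `f` is an epimorphism in
the category of `S`-semimodules, then the subtractive closure of `f(L)` equals
`Ker(g)`. -/
theorem closure_eq_ker_of_corestriction_epi {S L M N : Type} [Semiring S]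
    [AddCommMonoid L] [Module S L] [AddCommMonoid M] [Module S M]
    [AddCommMonoid N] [Module S N] (f : L →ₗ[S] M) (g : M →ₗ[S] N)
    (hgf : g.comp f = 0)
    (hepi : ∀ (Z : Type) [AddCommMonoid Z] [Module S Z]
      (h₁ h₂ : ↥(LinearMap.ker g) →ₗ[S] Z),
        h₁.comp (f.codRestrict (LinearMap.ker g)
            (fun l => LinearMap.mem_ker.mpr (by
              simpa using DFunLike.congr_fun hgf l)))
          = h₂.comp (f.codRestrict (LinearMap.ker g)
            (fun l => LinearMap.mem_ker.mpr (by
              simpa using DFunLike.congr_fun hgf l))) → h₁ = h₂) :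
    {m : M | ∃ l₁ l₂ : L, m + f l₁ = f l₂} = (LinearMap.ker g : Set M) := by
  ext m
  refine ⟨fun ⟨_, _, h⟩ => LinearMap.mem_ker_of_add_apply_eq hgf h, fun hm => ?_⟩
  obtain ⟨a, b, h⟩ := LinearMap.exists_add_apply_eq_of_epi _ hepi ⟨m, hm⟩
  exact ⟨a, b, congr(Subtype.val $h)⟩
end

section
/- Let f : L → M and g : M → N be S-linear maps of semimodules with g ∘ f = 0. The induced map g'' : Coker(f) → N (where Coker(f) = M/f(L) is the quotient by the Bourne congruence) is injective if and only if the subtractive closure of f(L) equals Ker(g) and g is k-uniform. -/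
/-!
The Bourne relation `imRel f` is already an additive congruence, so `g''` is injective exactly
when `g m₁ = g m₂` forces `m₁ ≡ m₂`. The subtractive closure of `f(L)` is the class of `0`,
so this condition applied to `m` and `0` gives `Ker g ⊆` closure, and applied to arbitrary
`m₁, m₂` gives `k`-uniformity with `f l₁, f l₂ ∈ Ker g`. Conversely, if `m₁ + k₁ = m₂ + k₂`
with `k₁, k₂` in the closure, then `m₁ ≡ m₁ + k₁ = m₂ + k₂ ≡ m₂`.
-/

/-- `γ` is `k`-uniform. -/
def KUniform {S X Y : Type*} [Semiring S] [AddCommMonoid X] [Module S X]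
    [AddCommMonoid Y] [Module S Y] (γ : X →ₗ[S] Y) : Prop :=
  ∀ x₁ x₂ : X, γ x₁ = γ x₂ →
    ∃ k₁ k₂ : X, γ k₁ = 0 ∧ γ k₂ = 0 ∧ x₁ + k₁ = x₂ + k₂

/-- The Bourne congruence on `M` induced by `f(L)` (whose quotient is `Coker f`). -/
def imRel {S L M : Type*} [Semiring S] [AddCommMonoid L] [Module S L]
    [AddCommMonoid M] [Module S M] (f : L →ₗ[S] M) : M → M → Prop :=
  fun m₁ m₂ => ∃ l₁ l₂ : L, m₁ + f l₁ = m₂ + f l₂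

theorem imRel_sound {S L M N : Type*} [Semiring S] [AddCommMonoid L] [Module S L]
    [AddCommMonoid M] [Module S M] [AddCommMonoid N] [Module S N]
    (f : L →ₗ[S] M) (g : M →ₗ[S] N) (hgf : g.comp f = 0) :
    ∀ m₁ m₂ : M, imRel f m₁ m₂ → g m₁ = g m₂ := by
  rintro m₁ m₂ ⟨l₁, l₂, h⟩
  have h' := congrArg g h
  have e : ∀ l : L, g (f l) = 0 := fun l => by simpa using DFunLike.congr_fun hgf l
  simpa [map_add, e] using h'

theorem Equivalence.injective_quot_lift_iff {α : Type*} {β : Sort*} {r : α → α → Prop}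
    (hr : Equivalence r) (φ : α → β) (hφ : ∀ a b, r a b → φ a = φ b) :
    Function.Injective (Quot.lift φ hφ) ↔ ∀ a b, φ a = φ b → r a b := by
  constructor
  · intro h a b hab
    exact (hr.quot_mk_eq_iff a b).1 (h hab)
  · rintro h ⟨a⟩ ⟨b⟩ hab
    exact Quot.sound (h a b hab)

section imRel

variable {S L M : Type*} [Semiring S] [AddCommMonoid L] [Module S L]
  [AddCommMonoid M] [Module S M] (f : L →ₗ[S] M)

def subtractiveClosure : Set M :=
  {m | ∃ l₁ l₂ : L, m + f l₁ = f l₂}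

theorem imRel_equivalence : Equivalence (imRel f) where
  refl _ := ⟨0, 0, rfl⟩
  symm := fun ⟨l₁, l₂, h⟩ => ⟨l₂, l₁, h.symm⟩
  trans := by
    rintro a b c ⟨l₁, l₂, hab⟩ ⟨l₃, l₄, hbc⟩
    refine ⟨l₁ + l₃, l₄ + l₂, ?_⟩
    calc a + f (l₁ + l₃) = b + f l₃ + f l₂ := by rw [map_add, ← add_assoc, hab, add_right_comm]
      _ = c + f (l₄ + l₂) := by rw [hbc, map_add, add_assoc]

theorem imRel_add_left {a b : M} (c : M) (h : imRel f a b) : imRel f (c + a) (c + b) := by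
  obtain ⟨l₁, l₂, h⟩ := h
  exact ⟨l₁, l₂, by rw [add_assoc, h, add_assoc]⟩

theorem imRel_zero_iff {m : M} : imRel f m 0 ↔ m ∈ subtractiveClosure f := by
  simp only [imRel, subtractiveClosure, zero_add, Set.mem_ofPred_eq]

theorem imRel_of_add_eq_add {m₁ m₂ k₁ k₂ : M} (hk₁ : k₁ ∈ subtractiveClosure f)
    (hk₂ : k₂ ∈ subtractiveClosure f) (h : m₁ + k₁ = m₂ + k₂) : imRel f m₁ m₂ := by
  have h₁ : imRel f (m₁ + k₁) m₁ := by
    simpa using imRel_add_left f m₁ ((imRel_zero_iff f).2 hk₁)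
  have h₂ : imRel f (m₂ + k₂) m₂ := by
    simpa using imRel_add_left f m₂ ((imRel_zero_iff f).2 hk₂)
  have e := imRel_equivalence f
  exact e.trans (e.symm h₁) (h ▸ h₂)

end imRel

/-- the induced map `g'' : Coker(f) → N` is injective iff the subtractive
closure of `f(L)` equals `Ker(g)` and `g` is `k`-uniform. -/
theorem coker_induced_injective_iff {S L M N : Type*} [Semiring S]
    [AddCommMonoid L] [Module S L] [AddCommMonoid M] [Module S M]
    [AddCommMonoid N] [Module S N] (f : L →ₗ[S] M) (g : M →ₗ[S] N)
    (hgf : g.comp f = 0) :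
    Function.Injective
        (Quot.lift (⇑g) (imRel_sound f g hgf) : Quot (imRel f) → N) ↔
      ({m : M | ∃ l₁ l₂ : L, m + f l₁ = f l₂} = {m : M | g m = 0} ∧ KUniform g) := by
  change _ ↔ subtractiveClosure f = _ ∧ _
  have hg : ∀ m, imRel f m 0 → g m = 0 := fun m hm => by
    simpa using imRel_sound f g hgf m 0 hm
  rw [(imRel_equivalence f).injective_quot_lift_iff]
  constructor
  · intro h
    refine ⟨Set.ext fun m => ?_, fun m₁ m₂ hm => ?_⟩
    · rw [← imRel_zero_iff]
      exact ⟨hg m, fun hm => h m 0 (by simpa using hm)⟩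
    · obtain ⟨l₁, l₂, hl⟩ := h m₁ m₂ hm
      exact ⟨f l₁, f l₂, hg _ ⟨0, l₁, by simp⟩, hg _ ⟨0, l₂, by simp⟩, hl⟩
  · rintro ⟨hker, hku⟩ m₁ m₂ hm
    obtain ⟨k₁, k₂, hk₁, hk₂, hk⟩ := hku m₁ m₂ hm
    exact imRel_of_add_eq_add f (hker ▸ hk₁) (hker ▸ hk₂) hk
end

section
/- A morphism h : X → Y of cancellative S-semimodules is an epimorphism in the category of cancellative S-semimodules if and only if the subtractive closure of h(X) equals Y, i.e., every y ∈ Y satisfies y + h(x₁) = h(x₂) for some x₁, x₂ ∈ X. -/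
/-!
The subtractive closure of `h(X)` is the class of `0` for the Bourne congruence of `range h`
(`a ~ b` iff `a + n₁ = b + n₂` with `nᵢ ∈ range h`). The quotient by it is cancellative as soon
as `Y` is, and the quotient map agrees with `0` on `h(X)`; so if `h` is an epimorphism, every
`y` is equivalent to `0`. Conversely, cancellation in the target propagates agreement of two
maps from `h(X)` to its subtractive closure.
-/

namespace Submodule

variable {S Y : Type*} [Semiring S] [AddCommMonoid Y] [Module S Y]

def bourneCon (N : Submodule S Y) : ModuleCon S Y where
  r a b := ∃ n₁ ∈ N, ∃ n₂ ∈ N, a + n₁ = b + n₂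
  iseqv.refl _ := ⟨0, N.zero_mem, 0, N.zero_mem, rfl⟩
  iseqv.symm := fun ⟨n₁, h₁, n₂, h₂, e⟩ ↦ ⟨n₂, h₂, n₁, h₁, e.symm⟩
  iseqv.trans := by
    rintro a b c ⟨n₁, h₁, n₂, h₂, e⟩ ⟨n₃, h₃, n₄, h₄, e'⟩
    refine ⟨n₁ + n₃, N.add_mem h₁ h₃, n₄ + n₂, N.add_mem h₄ h₂, ?_⟩
    rw [← add_assoc, e, add_right_comm, e', add_assoc]
  add' := by
    rintro a b c d ⟨n₁, h₁, n₂, h₂, e⟩ ⟨n₃, h₃, n₄, h₄, e'⟩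
    refine ⟨n₁ + n₃, N.add_mem h₁ h₃, n₂ + n₄, N.add_mem h₂ h₄, ?_⟩
    rw [add_add_add_comm, e, e', add_add_add_comm]
  smul s := by
    rintro a b ⟨n₁, h₁, n₂, h₂, e⟩
    exact ⟨s • n₁, N.smul_mem s h₁, s • n₂, N.smul_mem s h₂, by rw [← smul_add, e, smul_add]⟩

variable (N : Submodule S Y)

def bourneMkQ : Y →ₗ[S] N.bourneCon.Quotient :=
  { __ := AddCon.mk' N.bourneCon.toAddCon, map_smul' := fun _ _ ↦ rfl }

theorem bourneMkQ_eq_iff {a b : Y} :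
    N.bourneMkQ a = N.bourneMkQ b ↔ ∃ n₁ ∈ N, ∃ n₂ ∈ N, a + n₁ = b + n₂ :=
  AddCon.eq N.bourneCon.toAddCon

theorem bourneMkQ_eq_zero_iff {y : Y} :
    N.bourneMkQ y = 0 ↔ ∃ n₁ ∈ N, ∃ n₂ ∈ N, y + n₁ = n₂ := by
  rw [← N.bourneMkQ.map_zero, bourneMkQ_eq_iff]
  simp only [zero_add]

theorem bourneMkQ_surjective : Function.Surjective N.bourneMkQ :=
  Quotient.mk''_surjective

instance [IsRightCancelAdd Y] : IsRightCancelAdd N.bourneCon.Quotient where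
  add_right_cancel r p q e := by
    obtain ⟨a, rfl⟩ := N.bourneMkQ_surjective p
    obtain ⟨b, rfl⟩ := N.bourneMkQ_surjective q
    obtain ⟨c, rfl⟩ := N.bourneMkQ_surjective r
    obtain ⟨n₁, h₁, n₂, h₂, e⟩ := N.bourneMkQ_eq_iff.1 (by simpa only [← map_add] using e)
    refine N.bourneMkQ_eq_iff.2 ⟨n₁, h₁, n₂, h₂, add_right_cancel (b := c) ?_⟩
    rwa [add_right_comm, add_right_comm b]

instance [IsRightCancelAdd Y] : IsCancelAdd N.bourneCon.Quotient :=
  AddCommMagma.IsRightCancelAdd.toIsCancelAdd _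

end Submodule

theorem epi_iff_closure_eq_top_general {S X Y : Type} [Semiring S]
    [AddCommMonoid X] [Module S X]
    [AddCommMonoid Y] [Module S Y] [IsCancelAdd Y] (h : X →ₗ[S] Y) :
    (∀ (Z : Type) [AddCommMonoid Z] [Module S Z] [IsCancelAdd Z]
      (h₁ h₂ : Y →ₗ[S] Z), h₁.comp h = h₂.comp h → h₁ = h₂) ↔
      ∀ y : Y, ∃ x₁ x₂ : X, y + h x₁ = h x₂ := by
  constructor
  · intro hepi y
    have hmk : (LinearMap.range h).bourneMkQ.comp h = (0 : Y →ₗ[S] _).comp h := by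
      ext x
      exact (Submodule.bourneMkQ_eq_zero_iff _).2 ⟨0, zero_mem _, h x, ⟨x, rfl⟩, add_zero _⟩
    have hy := LinearMap.congr_fun (hepi _ _ _ hmk) y
    obtain ⟨_, ⟨x₁, rfl⟩, _, ⟨x₂, rfl⟩, e⟩ := (Submodule.bourneMkQ_eq_zero_iff _).1 hy
    exact ⟨x₁, x₂, e⟩
  · intro hcl Z _ _ _ h₁ h₂ hcomp
    ext y
    obtain ⟨x₁, x₂, hy⟩ := hcl y
    have hx (x : X) : h₁ (h x) = h₂ (h x) := LinearMap.congr_fun hcomp x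
    refine add_right_cancel (b := h₁ (h x₁)) ?_
    calc h₁ y + h₁ (h x₁) = h₂ (h x₂) := by rw [← map_add, hy, hx]
      _ = h₂ y + h₁ (h x₁) := by rw [← hy, map_add, hx]

/-- a morphism `h : X → Y` of cancellative `S`-semimodules is an
epimorphism in the category of cancellative `S`-semimodules iff the subtractive
closure of `h(X)` is all of `Y`. -/
theorem epi_iff_closure_eq_top {S X Y : Type} [Semiring S]
    [AddCommMonoid X] [Module S X] [IsCancelAdd X]
    [AddCommMonoid Y] [Module S Y] [IsCancelAdd Y] (h : X →ₗ[S] Y) :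
    (∀ (Z : Type) [AddCommMonoid Z] [Module S Z] [IsCancelAdd Z]
      (h₁ h₂ : Y →ₗ[S] Z), h₁.comp h = h₂.comp h → h₁ = h₂) ↔
      ∀ y : Y, ∃ x₁ x₂ : X, y + h x₁ = h x₂ :=
  epi_iff_closure_eq_top_general h
end

section
/- Let f : L → M and g : M → N be S-linear maps of semimodules with f surjective. Then g is i-uniform if and only if g ∘ f is i-uniform. Moreover, if g ∘ f is k-uniform then g is k-uniform, and if additionally f is k-uniform then g is k-uniform if and only if g ∘ f is k-uniform. -/
/-- `γ` is `i`-uniform: its image equals its subtractive closure. -/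
def IUniform {S X Y : Type*} [Semiring S] [AddCommMonoid X] [Module S X]
    [AddCommMonoid Y] [Module S Y] (γ : X →ₗ[S] Y) : Prop :=
  Set.range ⇑γ = {y : Y | ∃ x₁ x₂ : X, y + γ x₁ = γ x₂}

/-! Both notions only see `g ∘ f` through its image and through pairs of elements of `M`,
and a surjective `f` lets every element of `M` be lifted to `L`. For the converse of the
`k`-uniform transfer, the kernel elements of `g` witnessing `f l₁ + f k₁ = f l₂ + f k₂` are
lifted through `f`, and `k`-uniformity of `f` then turns this identity in `M` into one in `L`
at the cost of two more elements of `Ker f ⊆ Ker (g ∘ f)`. -/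

section

variable {S L M N : Type*} [Semiring S] [AddCommMonoid L] [Module S L]
  [AddCommMonoid M] [Module S M] [AddCommMonoid N] [Module S N]
  {f : L →ₗ[S] M} {g : M →ₗ[S] N}

theorem iUniform_comp_iff_of_surjective (hf : Function.Surjective f) :
    IUniform (g.comp f) ↔ IUniform g := by
  have hclosure : {y : N | ∃ x₁ x₂ : L, y + g (f x₁) = g (f x₂)}
      = {y : N | ∃ x₁ x₂ : M, y + g x₁ = g x₂} := by
    ext y
    exact (hf.exists₂ (p := fun x₁ x₂ => y + g x₁ = g x₂)).symm
  simp only [IUniform, LinearMap.coe_comp, hf.range_comp, Function.comp_apply, hclosure]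

theorem KUniform.of_comp (hf : Function.Surjective f) (hgf : KUniform (g.comp f)) :
    KUniform g := by
  intro m₁ m₂ h
  obtain ⟨l₁, rfl⟩ := hf m₁
  obtain ⟨l₂, rfl⟩ := hf m₂
  obtain ⟨k₁, k₂, hk₁, hk₂, hsum⟩ := hgf l₁ l₂ h
  exact ⟨f k₁, f k₂, hk₁, hk₂, by rw [← map_add, ← map_add, hsum]⟩

theorem KUniform.comp (hg : KUniform g) (hf : KUniform f) (hf_surj : Function.Surjective f) :
    KUniform (g.comp f) := by
  intro l₁ l₂ h
  obtain ⟨n₁, n₂, hn₁, hn₂, hsum⟩ := hg (f l₁) (f l₂) h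
  obtain ⟨k₁, rfl⟩ := hf_surj n₁
  obtain ⟨k₂, rfl⟩ := hf_surj n₂
  rw [← map_add, ← map_add] at hsum
  obtain ⟨j₁, j₂, hj₁, hj₂, hjsum⟩ := hf _ _ hsum
  refine ⟨k₁ + j₁, k₂ + j₂, ?_, ?_, ?_⟩
  · simp [hn₁, hj₁]
  · simp [hn₂, hj₂]
  · simpa only [add_assoc] using hjsum

end

/-- for `f` surjective, `g` is `i`-uniform iff `g ∘ f` is `i`-uniform;
if `g ∘ f` is `k`-uniform then `g` is `k`-uniform; and if `f` is `k`-uniform then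
`g` is `k`-uniform iff `g ∘ f` is `k`-uniform. -/
theorem uniform_comp_of_surjective {S L M N : Type*} [Semiring S]
    [AddCommMonoid L] [Module S L] [AddCommMonoid M] [Module S M]
    [AddCommMonoid N] [Module S N] (f : L →ₗ[S] M) (g : M →ₗ[S] N)
    (hf : Function.Surjective ⇑f) :
    (IUniform g ↔ IUniform (g.comp f)) ∧
      (KUniform (g.comp f) → KUniform g) ∧
      (KUniform f → (KUniform g ↔ KUniform (g.comp f))) :=
  ⟨(iUniform_comp_iff_of_surjective hf).symm, KUniform.of_comp hf,
    fun hfk => ⟨fun hg => hg.comp hfk hf, KUniform.of_comp hf⟩⟩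
end

section
/- Consider a commutative diagram of S-semimodules with rows L₁ →f₁ M₁ →g₁ N₁ and L₂ →f₂ M₂ →g₂ N₂ and vertical maps α₁ : L₁ → L₂ (surjective), α₂ : M₁ → M₂ (surjective), α₃ : N₁ → N₂ (injective). If the first row is exact (f₁(L₁) = Ker(g₁) and g₁ is k-uniform), then the second row is exact (f₂(L₂) = Ker(g₂) and g₂ is k-uniform). -/
/-- Exactness of `A →f B →g C`: `f(A) = Ker(g)` and `g` is `k`-uniform. -/
def IsExactSeq {S A B C : Type*} [Semiring S] [AddCommMonoid A] [Module S A]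
    [AddCommMonoid B] [Module S B] [AddCommMonoid C] [Module S C]
    (f : A →ₗ[S] B) (g : B →ₗ[S] C) : Prop :=
  Set.range ⇑f = {b : B | g b = 0} ∧ KUniform g

/-! Surjectivity of `α₂` transports images of `f₁` and kernel elements of `g₁` down to the
second row, and injectivity of `α₃` makes `g₁ m = g₁ m'` equivalent to
`g₂ (α₂ m) = g₂ (α₂ m')`; so the image, the kernel and the `k`-uniformity witnesses of the
first row map onto those of the second. -/

section Ladder

variable {S L₁ M₁ N₁ L₂ M₂ N₂ : Type*} [Semiring S]
  [AddCommMonoid L₁] [Module S L₁] [AddCommMonoid M₁] [Module S M₁]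
  [AddCommMonoid N₁] [Module S N₁] [AddCommMonoid L₂] [Module S L₂]
  [AddCommMonoid M₂] [Module S M₂] [AddCommMonoid N₂] [Module S N₂]

theorem image_range_eq_range_of_comp_eq {f₁ : L₁ →ₗ[S] M₁} {f₂ : L₂ →ₗ[S] M₂}
    {α₁ : L₁ →ₗ[S] L₂} {α₂ : M₁ →ₗ[S] M₂} (hc : α₂.comp f₁ = f₂.comp α₁)
    (hα₁ : Function.Surjective α₁) :
    α₂ '' Set.range f₁ = Set.range f₂ := by
  rw [← Set.range_comp, ← LinearMap.coe_comp, hc, LinearMap.coe_comp, hα₁.range_comp]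

theorem apply_eq_apply_iff_of_comp_eq {g₁ : M₁ →ₗ[S] N₁} {g₂ : M₂ →ₗ[S] N₂}
    {α₂ : M₁ →ₗ[S] M₂} {α₃ : N₁ →ₗ[S] N₂} (hc : α₃.comp g₁ = g₂.comp α₂)
    (hα₃ : Function.Injective α₃) (m m' : M₁) :
    g₁ m = g₁ m' ↔ g₂ (α₂ m) = g₂ (α₂ m') := by
  rw [← hα₃.eq_iff, ← LinearMap.comp_apply, ← LinearMap.comp_apply, hc,
    LinearMap.comp_apply, LinearMap.comp_apply]

theorem apply_eq_zero_iff_of_comp_eq {g₁ : M₁ →ₗ[S] N₁} {g₂ : M₂ →ₗ[S] N₂}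
    {α₂ : M₁ →ₗ[S] M₂} {α₃ : N₁ →ₗ[S] N₂} (hc : α₃.comp g₁ = g₂.comp α₂)
    (hα₃ : Function.Injective α₃) (m : M₁) :
    g₁ m = 0 ↔ g₂ (α₂ m) = 0 := by
  simpa only [map_zero] using apply_eq_apply_iff_of_comp_eq hc hα₃ m 0

theorem preimage_ker_eq_ker_of_comp_eq {g₁ : M₁ →ₗ[S] N₁} {g₂ : M₂ →ₗ[S] N₂}
    {α₂ : M₁ →ₗ[S] M₂} {α₃ : N₁ →ₗ[S] N₂} (hc : α₃.comp g₁ = g₂.comp α₂)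
    (hα₃ : Function.Injective α₃) :
    α₂ ⁻¹' {m | g₂ m = 0} = {m | g₁ m = 0} :=
  Set.ext fun m => (apply_eq_zero_iff_of_comp_eq hc hα₃ m).symm

theorem KUniform.of_comp_eq {g₁ : M₁ →ₗ[S] N₁} {g₂ : M₂ →ₗ[S] N₂}
    {α₂ : M₁ →ₗ[S] M₂} {α₃ : N₁ →ₗ[S] N₂} (hc : α₃.comp g₁ = g₂.comp α₂)
    (hα₂ : Function.Surjective α₂) (hα₃ : Function.Injective α₃) (hg₁ : KUniform g₁) :
    KUniform g₂ := by
  intro x₁ x₂ hx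
  obtain ⟨m₁, rfl⟩ := hα₂ x₁
  obtain ⟨m₂, rfl⟩ := hα₂ x₂
  obtain ⟨k₁, k₂, hk₁, hk₂, hsum⟩ := hg₁ m₁ m₂ ((apply_eq_apply_iff_of_comp_eq hc hα₃ _ _).2 hx)
  refine ⟨α₂ k₁, α₂ k₂, (apply_eq_zero_iff_of_comp_eq hc hα₃ k₁).1 hk₁,
    (apply_eq_zero_iff_of_comp_eq hc hα₃ k₂).1 hk₂, ?_⟩
  rw [← map_add, ← map_add, hsum]

end Ladder

/-- in a commutative ladder with `α₁, α₂` surjective and `α₃`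
injective, exactness of the first row implies exactness of the second row. -/
theorem exact_descends {S L₁ M₁ N₁ L₂ M₂ N₂ : Type*} [Semiring S]
    [AddCommMonoid L₁] [Module S L₁] [AddCommMonoid M₁] [Module S M₁]
    [AddCommMonoid N₁] [Module S N₁] [AddCommMonoid L₂] [Module S L₂]
    [AddCommMonoid M₂] [Module S M₂] [AddCommMonoid N₂] [Module S N₂]
    (f₁ : L₁ →ₗ[S] M₁) (g₁ : M₁ →ₗ[S] N₁) (f₂ : L₂ →ₗ[S] M₂) (g₂ : M₂ →ₗ[S] N₂)
    (α₁ : L₁ →ₗ[S] L₂) (α₂ : M₁ →ₗ[S] M₂) (α₃ : N₁ →ₗ[S] N₂)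
    (hc₁ : α₂.comp f₁ = f₂.comp α₁) (hc₂ : α₃.comp g₁ = g₂.comp α₂)
    (hα₁ : Function.Surjective ⇑α₁) (hα₂ : Function.Surjective ⇑α₂)
    (hα₃ : Function.Injective ⇑α₃) (hrow₁ : IsExactSeq f₁ g₁) :
    IsExactSeq f₂ g₂ := by
  obtain ⟨hrange, hg₁⟩ := hrow₁
  refine ⟨?_, hg₁.of_comp_eq hc₂ hα₂ hα₃⟩
  calc Set.range f₂ = α₂ '' Set.range f₁ := (image_range_eq_range_of_comp_eq hc₁ hα₁).symm
    _ = α₂ '' (α₂ ⁻¹' {m | g₂ m = 0}) := by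
      rw [hrange, preimage_ker_eq_ker_of_comp_eq hc₂ hα₃]
    _ = {m | g₂ m = 0} := Set.image_preimage_eq _ hα₂
end

section
/- (Short Five Lemma for cancellative semimodules, injectivity part) Given a commutative diagram with exact rows L₁ →f₁ M₁ →g₁ N₁ and 0 → L₂ →f₂ M₂ →g₂ N₂ (so f₂ is injective and both rows exact), where M₁ and M₂ are cancellative semimodules: if α₁ : L₁ → L₂ and α₃ : N₁ → N₂ are injective (and the relevant maps f₁, α₂ are cancellative, which holds automatically since M₁, M₂ are cancellative), then α₂ : M₁ → M₂ is injective. -/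
theorem IsExactSeq.exists_add_eq_add_of_map_eq {S A B C : Type*} [Semiring S]
    [AddCommMonoid A] [Module S A] [AddCommMonoid B] [Module S B]
    [AddCommMonoid C] [Module S C] {f : A →ₗ[S] B} {g : B →ₗ[S] C} (h : IsExactSeq f g)
    {b b' : B} (hb : g b = g b') : ∃ a a' : A, b + f a = b' + f a' := by
  obtain ⟨k, k', hk, hk', hsum⟩ := h.2 b b' hb
  obtain ⟨a, rfl⟩ : k ∈ Set.range f := h.1 ▸ hk
  obtain ⟨a', rfl⟩ : k' ∈ Set.range f := h.1 ▸ hk'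
  exact ⟨a, a', hsum⟩

theorem short_five_injective_general {S L₁ M₁ N₁ L₂ M₂ N₂ : Type*} [Semiring S]
    [AddCommMonoid L₁] [Module S L₁] [AddCommMonoid M₁] [Module S M₁]
    [IsCancelAdd M₁] [AddCommMonoid N₁] [Module S N₁]
    [AddCommMonoid L₂] [Module S L₂] [AddCommMonoid M₂] [Module S M₂]
    [IsCancelAdd M₂] [AddCommMonoid N₂] [Module S N₂]
    (f₁ : L₁ →ₗ[S] M₁) (g₁ : M₁ →ₗ[S] N₁) (f₂ : L₂ →ₗ[S] M₂) (g₂ : M₂ →ₗ[S] N₂)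
    (α₁ : L₁ →ₗ[S] L₂) (α₂ : M₁ →ₗ[S] M₂) (α₃ : N₁ →ₗ[S] N₂)
    (hc₁ : α₂.comp f₁ = f₂.comp α₁) (hc₂ : α₃.comp g₁ = g₂.comp α₂)
    (hrow₁ : IsExactSeq f₁ g₁)
    (hf₂ : Function.Injective ⇑f₂)
    (hα₁ : Function.Injective ⇑α₁) (hα₃ : Function.Injective ⇑α₃) :
    Function.Injective ⇑α₂ := by
  intro m m' h
  have hg : g₁ m = g₁ m' := hα₃ <| calc
    α₃ (g₁ m) = g₂ (α₂ m) := LinearMap.congr_fun hc₂ m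
    _ = g₂ (α₂ m') := by rw [h]
    _ = α₃ (g₁ m') := (LinearMap.congr_fun hc₂ m').symm
  obtain ⟨a, a', hsum⟩ := hrow₁.exists_add_eq_add_of_map_eq hg
  have hα₂f₁ : Function.Injective (α₂ ∘ₗ f₁) := by
    rw [hc₁, LinearMap.coe_comp]
    exact hf₂.comp hα₁
  have ha : a = a' := hα₂f₁ <| add_left_cancel (a := α₂ m) <| by
    simpa only [map_add, h, LinearMap.comp_apply] using congr_arg α₂ hsum
  subst ha
  exact add_right_cancel hsum

/-- Short Five Lemma, injectivity part: given a commutative ladder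
with exact rows, `f₂` injective, `M₁` and `M₂` cancellative, if `α₁` and `α₃` are
injective then `α₂` is injective. -/
theorem short_five_injective {S L₁ M₁ N₁ L₂ M₂ N₂ : Type*} [Semiring S]
    [AddCommMonoid L₁] [Module S L₁] [AddCommMonoid M₁] [Module S M₁]
    [IsCancelAdd M₁] [AddCommMonoid N₁] [Module S N₁]
    [AddCommMonoid L₂] [Module S L₂] [AddCommMonoid M₂] [Module S M₂]
    [IsCancelAdd M₂] [AddCommMonoid N₂] [Module S N₂]
    (f₁ : L₁ →ₗ[S] M₁) (g₁ : M₁ →ₗ[S] N₁) (f₂ : L₂ →ₗ[S] M₂) (g₂ : M₂ →ₗ[S] N₂)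
    (α₁ : L₁ →ₗ[S] L₂) (α₂ : M₁ →ₗ[S] M₂) (α₃ : N₁ →ₗ[S] N₂)
    (hc₁ : α₂.comp f₁ = f₂.comp α₁) (hc₂ : α₃.comp g₁ = g₂.comp α₂)
    (hrow₁ : IsExactSeq f₁ g₁) (hrow₂ : IsExactSeq f₂ g₂)
    (hf₂ : Function.Injective ⇑f₂)
    (hα₁ : Function.Injective ⇑α₁) (hα₃ : Function.Injective ⇑α₃) :
    Function.Injective ⇑α₂ :=
  short_five_injective_general f₁ g₁ f₂ g₂ α₁ α₂ α₃ hc₁ hc₂ hrow₁ hf₂ hα₁ hα₃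
end
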